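/- arXiv:1810.00533 — 2 statements merged into one kernel-verified Lean document; each statement's English description precedes it below -/
import Mathlib

section
/- Let α be a composition of size N and length R with α ≠ 1^R, let k be the number of parts of α equal to 1 and δ_α the number of end parts of α equal to 1, and let S' = Σ_{j≥1} q'_j. In the ribbon diagram of α, there are exactly k − δ_α cells x with the property that there are at least two cells above x in the same column as x, and these k − δ_α cells occur in exactly S' distinct columns. -/
/-!
The rightmost cell of row `i + 1` of a ribbon lies directly below the leftmost cell of row `i`,
so a column meets a set of consecutive rows. A cell therefore has two cells above it exactly when
the row directly above it consists of a single cell and is neither the top nor the bottom row: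
the deep cells correspond to the inner parts of `α` equal to `1`, and there are `k - δ_α` of them.
Inside a run of such inner parts all the deep cells lie in one column, while a part `≥ 2` moves
the column strictly to the left; so the columns correspond to the maximal runs of `1`s in
`α_2 ⋯ α_{R-1}`, and these runs are the positive entries of `p'(α)`.
-/

namespace RibbonNearEq

/-- A composition is a finite sequence of positive integers. -/
def IsComposition (α : List ℕ) : Prop := ∀ x ∈ α, 0 < x

/-- A partition is a weakly decreasing finite sequence of positive integers. -/
def IsPartitionList (ν : List ℕ) : Prop :=
  ν.Pairwise (· ≥ ·) ∧ ∀ x ∈ ν, 0 < x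

/-- The content of a tableau (given as its list of rows), as a monomial exponent
function: `contents T v` is the number of entries of `T` equal to `v`. -/
def contents (T : List (List ℕ)) : ℕ → ℕ := fun v => T.flatten.count v

/-- The rows of `T` have the lengths prescribed by the shape `sh`. -/
def RowsMatch (sh : List ℕ) (T : List (List ℕ)) : Prop :=
  T.length = sh.length ∧ ∀ i < T.length, (T.getD i []).length = sh.getD i 0

/-- Every row consists of positive integers and is weakly increasing. -/
def RowsSemistandard (T : List (List ℕ)) : Prop :=
  ∀ row ∈ T, row.Pairwise (· ≤ ·) ∧ ∀ x ∈ row, 0 < x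

/-- A semistandard Young tableau of (left-justified) partition shape `ν`:
rows weakly increase left to right, columns strictly increase top to bottom. -/
def IsSSYT (ν : List ℕ) (T : List (List ℕ)) : Prop :=
  RowsMatch ν T ∧ RowsSemistandard T ∧
  ∀ i, i + 1 < T.length → ∀ j < (T.getD (i + 1) []).length,
    (T.getD i []).getD j 0 < (T.getD (i + 1) []).getD j 0

/-- A semistandard Young tableau of ribbon shape `α` (rows listed from top to
bottom, the rightmost cell of row `i+1` directly below the leftmost cell of row
`i`): rows weakly increase, and the leftmost entry of row `i` is strictly less
than the rightmost entry of row `i+1` (the two-cell columns strictly increase). -/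
def IsRibbonSSYT (α : List ℕ) (T : List (List ℕ)) : Prop :=
  RowsMatch α T ∧ RowsSemistandard T ∧
  ∀ i, i + 1 < T.length →
    (T.getD i []).headI < (T.getD (i + 1) []).getLastD 0

/-- The Schur function `s_ν`, encoded by its monomial coefficient function: the
coefficient of `x_1^{m 1} x_2^{m 2} ⋯` is the number of SSYT of shape `ν` and
content `m`. -/
noncomputable def schur (ν : List ℕ) : (ℕ → ℕ) → ℤ :=
  fun m => (Set.ncard {T : List (List ℕ) | IsSSYT ν T ∧ contents T = m} : ℤ)

/-- The ribbon Schur function `r_α`, encoded by its monomial coefficient function. -/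
noncomputable def ribbon (α : List ℕ) : (ℕ → ℕ) → ℤ :=
  fun m => (Set.ncard {T : List (List ℕ) | IsRibbonSSYT α T ∧ contents T = m} : ℤ)

/-- `δ_α`: the number of end parts of `α` equal to `1`. -/
def deltaEnds (α : List ℕ) : ℕ :=
  (if α.headI = 1 then 1 else 0) + (if α.getLastD 0 = 1 then 1 else 0)

/-- The lengths `p_1, …, p_{R-k+1}` of the (possibly empty) runs of `1`'s in `α`
before, between, and after the parts of `α` that are at least `2`. -/
def oneRuns : List ℕ → List ℕ
  | [] => [0]
  | x :: rest =>
    if x = 1 then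
      match oneRuns rest with
      | [] => [1]
      | r :: rs => (r + 1) :: rs
    else 0 :: oneRuns rest

/-- `p'(α) = (p_1 - 1) p_2 ⋯ p_{R-k} (p_{R-k+1} - 1)`. -/
def p'List (α : List ℕ) : List ℤ :=
  let l : List ℤ := (oneRuns α).map fun n => (n : ℤ)
  (l.headI - 1) :: (l.tail.dropLast ++ [l.getLastD 0 - 1])

/-- `q'(α)`: `q'_j` is the number of entries of `p'(α)` equal to `j`. -/
def q'Seq (α : List ℕ) : ℕ → ℕ := fun j => (p'List α).count ((j : ℤ))

/-- `S' = Σ_{j ≥ 1} q'_j`: the number of entries of `p'(α)` that are `≥ 1`. -/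
def S'count (α : List ℕ) : ℕ := ((p'List α).filter fun x => decide (1 ≤ x)).length

/-- The leftmost column occupied by row `i` (0-based, rows from the top) of the
ribbon diagram of `α`, normalizing the bottom row to start in column `0`. -/
def leftmostCol (α : List ℕ) (i : ℕ) : ℕ :=
  (α.drop (i + 1)).sum - (α.length - 1 - i)

/-- The set of cells `(row, column)` of the ribbon diagram of `α`. -/
def ribbonCells (α : List ℕ) : Set (ℕ × ℕ) :=
  {c | c.1 < α.length ∧ leftmostCol α c.1 ≤ c.2 ∧
    c.2 < leftmostCol α c.1 + α.getD c.1 0}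

/-- Cells of the ribbon diagram of `α` having at least two cells above them in
the same column. -/
def deepCells (α : List ℕ) : Set (ℕ × ℕ) :=
  {x | x ∈ ribbonCells α ∧
    2 ≤ Set.ncard {y | y ∈ ribbonCells α ∧ y.2 = x.2 ∧ y.1 < x.1}}

open Finset

section Ribbon

variable {α : List ℕ}

theorem IsComposition.length_sub_le_sum_drop (hα : IsComposition α) (j : ℕ) :
    α.length - j ≤ (α.drop j).sum := by
  simpa using List.length_le_sum_of_one_le (α.drop j) fun x hx => hα x (List.mem_of_mem_drop hx)

theorem IsComposition.one_le_getD (hα : IsComposition α) {i : ℕ} (hi : i < α.length) :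
    1 ≤ α.getD i 0 := by
  rw [List.getD_eq_getElem _ _ hi]
  exact hα _ (List.getElem_mem hi)

theorem IsComposition.leftmostCol_succ_add (hα : IsComposition α) {i : ℕ}
    (hi : i + 1 < α.length) :
    leftmostCol α (i + 1) + α.getD (i + 1) 0 = leftmostCol α i + 1 := by
  have := hα.length_sub_le_sum_drop (i + 1 + 1)
  rw [leftmostCol, leftmostCol, List.drop_eq_getElem_cons hi, List.getD_eq_getElem _ _ hi,
    List.sum_cons]
  have := hα.one_le_getD hi
  rw [List.getD_eq_getElem _ _ hi] at this
  omega

theorem IsComposition.antitone_leftmostCol (hα : IsComposition α) : Antitone (leftmostCol α) := by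
  refine antitone_nat_of_succ_le fun i => ?_
  by_cases hi : i + 1 < α.length
  · have := hα.leftmostCol_succ_add hi
    have := hα.one_le_getD hi
    omega
  · simp [leftmostCol, List.drop_eq_nil_of_le (by omega : α.length ≤ i + 1 + 1)]

theorem ribbonCells_finite (α : List ℕ) : (ribbonCells α).Finite := by
  refine ((Set.finite_Iio α.length).prod (Set.finite_Iio (α.sum + 1))).subset ?_
  rintro ⟨r, c⟩ ⟨hr, -, hc⟩
  dsimp only at hr hc
  refine ⟨hr, ?_⟩
  have hL : leftmostCol α r ≤ (α.drop (r + 1)).sum := Nat.sub_le _ _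
  have hs : (α.drop r).sum ≤ α.sum := (List.drop_sublist r α).sum_le_sum fun _ _ => Nat.zero_le _
  rw [List.drop_eq_getElem_cons hr, List.sum_cons] at hs
  rw [List.getD_eq_getElem _ _ hr] at hc
  simp only [Set.mem_Iio]
  omega

theorem IsComposition.leftmostCol_eq_of_mem_ribbonCells (hα : IsComposition α) {i j c : ℕ}
    (hi : (i, c) ∈ ribbonCells α) (hj : (j, c) ∈ ribbonCells α) {k : ℕ} (hik : i ≤ k)
    (hkj : k < j) : leftmostCol α k = c := by
  obtain ⟨j, rfl⟩ : ∃ j', j = j' + 1 := ⟨j - 1, by omega⟩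
  have hsucc := hα.leftmostCol_succ_add hj.1
  have hki := hα.antitone_leftmostCol hik
  have hjk := hα.antitone_leftmostCol (Nat.le_of_lt_succ hkj)
  have := hi.2.1
  have := hj.2.2
  dsimp only at *
  omega


theorem exists_fst_add_one_lt_of_two_le_ncard {A : Set (ℕ × ℕ)} {r c : ℕ}
    (hA : ∀ y ∈ A, y.2 = c ∧ y.1 < r) (h : 2 ≤ A.ncard) : ∃ y ∈ A, y.1 + 1 < r := by
  by_contra! hr
  have hsub : A ⊆ {(r - 1, c)} := fun y hy => by
    have := hA y hy
    have := hr y hy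
    ext <;> dsimp only at * <;> omega
  have := (Set.ncard_le_ncard hsub).trans_eq (Set.ncard_singleton _)
  omega

theorem IsComposition.exists_of_mem_deepCells (hα : IsComposition α) {r c : ℕ}
    (h : (r, c) ∈ deepCells α) :
    ∃ j, (j + 2 < α.length ∧ α.getD (j + 1) 0 = 1) ∧ (j + 2, leftmostCol α (j + 1)) = (r, c) := by
  obtain ⟨hx, hcard⟩ := h
  obtain ⟨⟨i, c'⟩, ⟨hi, rfl, -⟩, hir⟩ :=
    exists_fst_add_one_lt_of_two_le_ncard (fun y hy => hy.2) hcard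
  have hr := hx.1
  dsimp only at hir hr
  obtain ⟨j, rfl⟩ : ∃ j, r = j + 2 := ⟨r - 2, by omega⟩
  have hj := hα.leftmostCol_eq_of_mem_ribbonCells hi hx (k := j) (by omega) (by omega)
  have hj1 := hα.leftmostCol_eq_of_mem_ribbonCells hi hx (k := j + 1) (by omega) (by omega)
  have hsucc := hα.leftmostCol_succ_add (i := j) (by omega)
  exact ⟨j, ⟨hr, by omega⟩, by rw [hj1]⟩

theorem IsComposition.mem_deepCells (hα : IsComposition α) {j : ℕ} (hj : j + 2 < α.length)
    (h1 : α.getD (j + 1) 0 = 1) : (j + 2, leftmostCol α (j + 1)) ∈ deepCells α := by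
  have hsucc := hα.leftmostCol_succ_add (i := j) (by omega)
  have hsucc' : leftmostCol α (j + 2) + α.getD (j + 2) 0 = leftmostCol α (j + 1) + 1 :=
    hα.leftmostCol_succ_add hj
  have hanti := hα.antitone_leftmostCol (by omega : j + 1 ≤ j + 2)
  have hpos := hα.one_le_getD (i := j) (by omega)
  refine ⟨⟨hj, hanti, by dsimp only; omega⟩, ?_⟩
  have hpair : {(j, leftmostCol α (j + 1)), (j + 1, leftmostCol α (j + 1))} ⊆
      {y | y ∈ ribbonCells α ∧ y.2 = leftmostCol α (j + 1) ∧ y.1 < j + 2} := by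
    rintro y (rfl | rfl) <;> refine ⟨⟨?_, ?_, ?_⟩, rfl, ?_⟩ <;> dsimp only <;> omega
  calc 2 = Set.ncard {(j, leftmostCol α (j + 1)), (j + 1, leftmostCol α (j + 1))} :=
        (Set.ncard_pair (by simp)).symm
    _ ≤ _ := Set.ncard_le_ncard hpair ((ribbonCells_finite α).subset fun y hy => hy.1)

theorem IsComposition.deepCells_eq_image (hα : IsComposition α) :
    deepCells α = (fun j => (j + 2, leftmostCol α (j + 1))) ''
      {j | j + 2 < α.length ∧ α.getD (j + 1) 0 = 1} := by
  ext ⟨r, c⟩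
  refine ⟨hα.exists_of_mem_deepCells, ?_⟩
  rintro ⟨j, ⟨hj, h1⟩, hjx⟩
  exact hjx ▸ hα.mem_deepCells hj h1

theorem IsComposition.exists_runStart_leftmostCol_eq (hα : IsComposition α) {j : ℕ}
    (hj : j + 2 < α.length) (h1 : α.getD (j + 1) 0 = 1) :
    ∃ i ≤ j, α.getD (i + 1) 0 = 1 ∧ (i = 0 ∨ α.getD i 0 ≠ 1) ∧
      leftmostCol α (i + 1) = leftmostCol α (j + 1) := by
  induction j with
  | zero => exact ⟨0, le_rfl, h1, Or.inl rfl, rfl⟩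
  | succ j ih =>
    by_cases hprev : α.getD (j + 1) 0 = 1
    · obtain ⟨i, hij, hi1, hi0, hi⟩ := ih (by omega) hprev
      have hsucc := hα.leftmostCol_succ_add (i := j + 1) (by omega)
      exact ⟨i, by omega, hi1, hi0, by omega⟩
    · exact ⟨j + 1, le_rfl, h1, Or.inr hprev, rfl⟩

theorem IsComposition.leftmostCol_lt_of_lt (hα : IsComposition α) {i j : ℕ} (hij : i < j)
    (hi : α.getD (i + 1) 0 = 1) (hj : j + 1 < α.length) (hj0 : j = 0 ∨ α.getD j 0 ≠ 1) :
    leftmostCol α (j + 1) < leftmostCol α (i + 1) := by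
  obtain ⟨j, rfl⟩ : ∃ j', j = j' + 1 := ⟨j - 1, by omega⟩
  have hj2 : 2 ≤ α.getD (j + 1) 0 := by
    have := hα.one_le_getD (i := j + 1) (by omega)
    omega
  have hi1 : i + 1 ≤ j := by
    by_contra! h
    obtain rfl : i = j := by omega
    omega
  have hsucc := hα.leftmostCol_succ_add (i := j) (by omega)
  have h1 := hα.antitone_leftmostCol (by omega : j + 1 ≤ j + 1 + 1)
  have h2 := hα.antitone_leftmostCol hi1
  omega

end Ribbon

theorem card_filter_getD_eq_count {β : Type*} [DecidableEq β] (m : List β) (d a : β) :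
    #{j ∈ range m.length | m.getD j d = a} = m.count a := by
  induction m with
  | nil => simp
  | cons x l ih =>
    rw [List.length_cons, card_filter, sum_range_succ']
    simp only [List.getD_cons_succ, List.getD_cons_zero]
    rw [← card_filter, ih, List.count_cons]
    simp only [beq_iff_eq]

-- For `α = [1]` both sides vanish, the right one by truncated subtraction `1 - 2 = 0`.
theorem count_tail_dropLast (α : List ℕ) :
    α.tail.dropLast.count 1 = α.count 1 - deltaEnds α := by
  rcases α with _ | ⟨x, s⟩
  · simp
  rcases List.eq_nil_or_concat s with rfl | ⟨u, y, rfl⟩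
  · by_cases hx : x = 1 <;> simp [deltaEnds, hx]
  · rw [List.concat_eq_append, List.tail_cons, List.dropLast_concat, deltaEnds, ← List.cons_append,
      List.getLastD_concat]
    by_cases hx : x = 1 <;> by_cases hy : y = 1 <;> simp [hx, hy]

theorem oneRuns_ne_nil (l : List ℕ) : oneRuns l ≠ [] := by
  cases l with
  | nil => simp [oneRuns]
  | cons x s =>
    unfold oneRuns
    split_ifs
    · split <;> simp
    · simp

theorem oneRuns_cons_one (s : List ℕ) :
    oneRuns (1 :: s) = ((oneRuns s).headI + 1) :: (oneRuns s).tail := by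
  cases h : oneRuns s with
  | nil => exact absurd h (oneRuns_ne_nil s)
  | cons r rs => simp [oneRuns, h]

theorem oneRuns_cons_of_ne_one {x : ℕ} (hx : x ≠ 1) (s : List ℕ) :
    oneRuns (x :: s) = 0 :: oneRuns s := by
  simp [oneRuns, hx]

theorem length_oneRuns (l : List ℕ) : (oneRuns l).length = l.countP (· ≠ 1) + 1 := by
  induction l with
  | nil => simp [oneRuns]
  | cons x s ih =>
    by_cases hx : x = 1
    · subst hx
      rw [oneRuns_cons_one, List.length_cons, List.length_tail, ih]
      simp
    · simp [oneRuns_cons_of_ne_one hx, ih, hx]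

theorem cons_headI_tail_oneRuns (l : List ℕ) :
    (oneRuns l).headI :: (oneRuns l).tail = oneRuns l := by
  cases h : oneRuns l with
  | nil => exact absurd h (oneRuns_ne_nil l)
  | cons r rs => rfl

theorem oneRuns_append (l r : List ℕ) :
    oneRuns (l ++ r) =
      (oneRuns l).dropLast ++ ((oneRuns l).getLastD 0 + (oneRuns r).headI) :: (oneRuns r).tail := by
  induction l with
  | nil => simp [oneRuns, cons_headI_tail_oneRuns]
  | cons x s ih =>
    by_cases hx : x = 1
    · subst hx
      rw [List.cons_append, oneRuns_cons_one, oneRuns_cons_one, ih]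
      rcases h : oneRuns s with _ | ⟨a, _ | ⟨b, u⟩⟩
      · exact absurd h (oneRuns_ne_nil s)
      · simp; ring
      · simp
    · rw [List.cons_append, oneRuns_cons_of_ne_one hx, oneRuns_cons_of_ne_one hx, ih]
      obtain ⟨a, u, h⟩ := List.exists_cons_of_ne_nil (oneRuns_ne_nil s)
      simp [h]

theorem exists_oneRuns_eq_append_singleton (l : List ℕ) : ∃ u a, oneRuns l = u ++ [a] := by
  obtain ⟨u, a, h⟩ := (List.eq_nil_or_concat (oneRuns l)).resolve_left (oneRuns_ne_nil l)
  exact ⟨u, a, by rw [h, List.concat_eq_append]⟩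

theorem oneRuns_append_one (l : List ℕ) :
    oneRuns (l ++ [1]) = (oneRuns l).dropLast ++ [(oneRuns l).getLastD 0 + 1] := by
  simp [oneRuns_append, oneRuns]

theorem oneRuns_append_of_ne_one {x : ℕ} (hx : x ≠ 1) (l : List ℕ) :
    oneRuns (l ++ [x]) = oneRuns l ++ [0] := by
  obtain ⟨u, a, h⟩ := exists_oneRuns_eq_append_singleton l
  rw [oneRuns_append, oneRuns_cons_of_ne_one hx, h]
  simp [oneRuns]

theorem getLastD_oneRuns_pos_iff (l : List ℕ) : 0 < (oneRuns l).getLastD 0 ↔ l.getLastD 0 = 1 := by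
  induction l using List.reverseRecOn with
  | nil => simp [oneRuns]
  | append_singleton l x _ =>
    by_cases hx : x = 1
    · simp [hx, oneRuns_append_one]
    · simp [hx, oneRuns_append_of_ne_one hx]

def runStarts (m : List ℕ) : Finset ℕ :=
  {j ∈ range m.length | m.getD j 0 = 1 ∧ (j = 0 ∨ m.getD (j - 1) 0 ≠ 1)}

theorem runStarts_append_singleton (l : List ℕ) (x : ℕ) :
    runStarts (l ++ [x]) =
      if x = 1 ∧ l.getLastD 0 ≠ 1 then insert l.length (runStarts l) else runStarts l := by
  have hnew : (l.length = 0 ∨ (l ++ [x]).getD (l.length - 1) 0 ≠ 1) ↔ l.getLastD 0 ≠ 1 := by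
    rcases List.eq_nil_or_concat l with rfl | ⟨u, a, rfl⟩ <;> simp
  have hold : ∀ j ∈ range l.length,
      ((l ++ [x]).getD j 0 = 1 ∧ (j = 0 ∨ (l ++ [x]).getD (j - 1) 0 ≠ 1)) ↔
        (l.getD j 0 = 1 ∧ (j = 0 ∨ l.getD (j - 1) 0 ≠ 1)) := by
    intro j hj
    rw [mem_range] at hj
    rw [List.getD_append _ _ _ _ hj, List.getD_append _ _ _ _ (by omega)]
  rw [runStarts, List.length_append, List.length_singleton, range_add_one, filter_insert,
    filter_congr hold, List.getD_append_right _ _ _ _ le_rfl, Nat.sub_self,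
    List.getD_cons_zero]
  exact if_congr (and_congr_right fun _ => hnew) rfl rfl

theorem card_runStarts (m : List ℕ) : #(runStarts m) = (oneRuns m).countP (0 < ·) := by
  induction m using List.reverseRecOn with
  | nil => simp [runStarts, oneRuns]
  | append_singleton l x ih =>
    rw [runStarts_append_singleton]
    by_cases hx : x = 1
    · obtain ⟨u, a, h⟩ := exists_oneRuns_eq_append_singleton l
      have hlast := getLastD_oneRuns_pos_iff l
      rw [h, List.getLastD_concat] at hlast
      rw [h, List.countP_append] at ih
      subst hx
      rw [oneRuns_append_one, h, List.dropLast_concat, List.getLastD_concat, List.countP_append]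
      by_cases hl : l.getLastD 0 = 1
      · simp_all
      · rw [if_pos ⟨rfl, hl⟩, card_insert_of_notMem (fun hm => by simp [runStarts] at hm), ih]
        simp_all
    · simp [hx, ih, oneRuns_append_of_ne_one hx]

theorem exists_oneRuns_eq_cons_append {α : List ℕ} (hα1 : α ≠ List.replicate α.length 1) :
    ∃ p t q, oneRuns α = p :: (t ++ [q]) := by
  have hlen : 2 ≤ (oneRuns α).length := by
    rw [length_oneRuns, Nat.succ_le_succ_iff, Nat.one_le_iff_ne_zero, Ne,
      List.countP_eq_zero]
    simpa [List.eq_replicate_iff] using hα1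
  obtain ⟨p, w, hw⟩ := List.exists_cons_of_length_pos (by omega : 0 < (oneRuns α).length)
  obtain ⟨t, q, rfl⟩ := (List.eq_nil_or_concat w).resolve_left (by rintro rfl; simp [hw] at hlen)
  exact ⟨p, t, q, by simpa using hw⟩

theorem S'count_eq {α t : List ℕ} {p q : ℕ} (hw : oneRuns α = p :: (t ++ [q])) :
    S'count α = (if 2 ≤ p then 1 else 0) + t.countP (0 < ·) + (if 2 ≤ q then 1 else 0) := by
  have hpred : ∀ n : ℕ, (1 ≤ (n : ℤ) - 1) ↔ 2 ≤ n := fun n => by omega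
  -- `p'List` casts the runs to `ℤ` through the list monad, hence `pure_def` and `bind_eq_flatMap`.
  simp only [S'count, p'List, hw, List.pure_def, List.bind_eq_flatMap, ← List.map_eq_flatMap,
    List.map_cons, List.map_append, List.map_nil, List.map_id', List.headI_cons, List.tail_cons]
  rw [← List.cons_append, List.dropLast_concat, List.getLastD_cons, List.getLastD_concat,
    ← List.countP_eq_length_filter, List.countP_append, List.countP_cons, List.countP_map]
  simp [Function.comp_def, hpred, Nat.one_le_iff_ne_zero, Nat.pos_iff_ne_zero, add_comm]

theorem countP_oneRuns_dropLast (s : List ℕ) :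
    (oneRuns s.dropLast).countP (0 < ·) =
      (oneRuns s).dropLast.countP (0 < ·) + if 2 ≤ (oneRuns s).getLastD 0 then 1 else 0 := by
  rcases List.eq_nil_or_concat s with rfl | ⟨u, y, rfl⟩
  · simp [oneRuns]
  by_cases hy : y = 1
  · obtain ⟨v, a, hv⟩ := exists_oneRuns_eq_append_singleton u
    simp [hy, oneRuns_append_one, hv, Nat.one_le_iff_ne_zero, Nat.pos_iff_ne_zero]
  · simp [oneRuns_append_of_ne_one hy]

theorem countP_oneRuns_tail_dropLast {α t : List ℕ} {p q : ℕ} (hw : oneRuns α = p :: (t ++ [q])) :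
    (oneRuns α.tail.dropLast).countP (0 < ·) =
      (if 2 ≤ p then 1 else 0) + t.countP (0 < ·) + (if 2 ≤ q then 1 else 0) := by
  rcases α with _ | ⟨x, s⟩
  · simp [oneRuns] at hw
  rw [List.tail_cons, countP_oneRuns_dropLast]
  by_cases hx : x = 1
  · subst hx
    rw [oneRuns_cons_one, List.cons.injEq] at hw
    obtain ⟨rfl, ht⟩ := hw
    obtain ⟨r, hr⟩ : ∃ r, (oneRuns s).headI = r := ⟨_, rfl⟩
    have hs : oneRuns s = r :: (t ++ [q]) := by rw [← ht, ← hr, cons_headI_tail_oneRuns]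
    rw [hr, hs, ← List.cons_append, List.dropLast_concat, List.getLastD_concat, List.countP_cons]
    simp only [decide_eq_true_eq]
    split_ifs <;> omega
  · rw [oneRuns_cons_of_ne_one hx, List.cons.injEq] at hw
    rw [← hw.1, hw.2]
    simp

theorem getD_tail_dropLast {α : List ℕ} {j : ℕ} (hj : j + 2 < α.length) :
    α.tail.dropLast.getD j 0 = α.getD (j + 1) 0 := by
  rw [List.getD_eq_getElem _ _ (by simp; omega), List.getD_eq_getElem _ _ (by omega),
    List.getElem_dropLast, List.getElem_tail]

theorem coe_filter_getD_tail_dropLast_eq_one (α : List ℕ) :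
    (↑{j ∈ range α.tail.dropLast.length | α.tail.dropLast.getD j 0 = 1} : Set ℕ) =
      {j | j + 2 < α.length ∧ α.getD (j + 1) 0 = 1} := by
  ext j
  simp only [coe_filter, mem_range, List.length_dropLast, List.length_tail, Set.mem_ofPred_eq]
  constructor
  · rintro ⟨hj, h1⟩
    exact ⟨by omega, by rwa [← getD_tail_dropLast (by omega)]⟩
  · rintro ⟨hj, h1⟩
    exact ⟨by omega, by rwa [getD_tail_dropLast hj]⟩

theorem coe_runStarts_tail_dropLast (α : List ℕ) :
    (↑(runStarts α.tail.dropLast) : Set ℕ) =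
      {j | j + 2 < α.length ∧ α.getD (j + 1) 0 = 1 ∧ (j = 0 ∨ α.getD j 0 ≠ 1)} := by
  ext j
  simp only [runStarts, coe_filter, mem_range, List.length_dropLast, List.length_tail,
    Set.mem_ofPred_eq]
  by_cases hjR : j + 2 < α.length
  · rw [getD_tail_dropLast hjR]
    have hj : j < α.length - 1 - 1 := by omega
    rcases j with _ | j
    · simp only [hj, hjR, true_and, true_or, and_true]
    · rw [Nat.add_sub_cancel, getD_tail_dropLast (by omega)]
      simp only [hj, hjR, true_and, Nat.add_one_ne_zero, false_or]
  · simp only [hjR, false_and, iff_false]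
    omega

theorem IsComposition.ncard_deepCells {α : List ℕ} (hα : IsComposition α) :
    (deepCells α).ncard = α.tail.dropLast.count 1 := by
  rw [hα.deepCells_eq_image,
    Set.ncard_image_of_injective _ fun a b h => by simpa using congrArg Prod.fst h,
    ← coe_filter_getD_tail_dropLast_eq_one, Set.ncard_coe_finset, card_filter_getD_eq_count]

theorem IsComposition.ncard_image_snd_deepCells {α : List ℕ} (hα : IsComposition α) :
    (Prod.snd '' deepCells α).ncard = #(runStarts α.tail.dropLast) := by
  set T := {j | j + 2 < α.length ∧ α.getD (j + 1) 0 = 1 ∧ (j = 0 ∨ α.getD j 0 ≠ 1)}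
  have himage : (fun j => leftmostCol α (j + 1)) '' {j | j + 2 < α.length ∧ α.getD (j + 1) 0 = 1}
      = (fun j => leftmostCol α (j + 1)) '' T := by
    refine Set.Subset.antisymm ?_ (Set.image_mono fun j hj => ⟨hj.1, hj.2.1⟩)
    rintro _ ⟨j, ⟨hj, h1⟩, rfl⟩
    obtain ⟨i, hij, hi1, hi0, hi⟩ := hα.exists_runStart_leftmostCol_eq hj h1
    exact ⟨i, ⟨by omega, hi1, hi0⟩, hi⟩
  have hanti : StrictAntiOn (fun j => leftmostCol α (j + 1)) T :=
    fun i hi j hj hij => hα.leftmostCol_lt_of_lt hij hi.2.1 (by have := hj.1; omega) hj.2.2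
  rw [hα.deepCells_eq_image, Set.image_image, himage, hanti.injOn.ncard_image,
    ← Set.ncard_coe_finset, coe_runStarts_tail_dropLast]

/-- Lemma 3.15: the ribbon diagram of `α` has exactly `k - δ_α` cells with at
least two cells above them in the same column, and these cells occur in exactly
`S'` distinct columns. -/
theorem deep_cells_count
    (α : List ℕ) (hα : IsComposition α)
    (hα1 : α ≠ List.replicate α.length 1) :
    Set.ncard (deepCells α) = α.count 1 - deltaEnds α ∧
    Set.ncard (Prod.snd '' deepCells α) = S'count α := by
  obtain ⟨p, t, q, hw⟩ := exists_oneRuns_eq_cons_append hα1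
  refine ⟨by rw [hα.ncard_deepCells, count_tail_dropLast], ?_⟩
  rw [hα.ncard_image_snd_deepCells, card_runStarts, countP_oneRuns_tail_dropLast hw, S'count_eq hw]

end RibbonNearEq
end

section
/- Let α be a composition of size N and let μ range over partitions of N. Then in the Schur expansion r_α = Σ_μ c_{α,μ} s_μ, the coefficient of s_{λ(α)} equals 1, and c_{α,μ} = 0 for every partition μ of N with μ <_lex λ(α); that is, r_α = s_{λ(α)} + Σ_{μ >_lex λ(α)} b_μ s_μ for some nonnegative integers b_μ. -/
namespace RibbonNearEq

/-- The reading word of a tableau: entries read right to left, top to bottom. -/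
def readingWord (T : List (List ℕ)) : List ℕ := (T.map List.reverse).flatten

/-- Lattice word: every initial segment contains at least as many `i`'s as
`(i+1)`'s, for every `i ≥ 1`. -/
def IsLatticeWord (w : List ℕ) : Prop :=
  ∀ n i : ℕ, (w.take n).count (i + 2) ≤ (w.take n).count (i + 1)

/-- A Littlewood–Richardson tableau of ribbon shape `α`. -/
def IsLR (α : List ℕ) (T : List (List ℕ)) : Prop :=
  IsRibbonSSYT α T ∧ IsLatticeWord (readingWord T)

/-- The monomial exponent function associated to a partition list `ν`. -/
def monoOf (ν : List ℕ) : ℕ → ℕ :=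
  fun v => if v = 0 then 0 else ν.getD (v - 1) 0

/-- The Littlewood–Richardson coefficient `c_{α,ν}`: the number of LR tableaux
of ribbon shape `α` and content `ν`. -/
noncomputable def lrCoeff (α ν : List ℕ) : ℕ :=
  Set.ncard {T : List (List ℕ) | IsLR α T ∧ contents T = monoOf ν}

/-- Strict lexicographic order on partitions, padded with zeros. -/
def LexLtList (μ ν : List ℕ) : Prop :=
  ∃ i, (∀ i' < i, μ.getD i' 0 = ν.getD i' 0) ∧ μ.getD i 0 < ν.getD i 0


/-!
Reading an LR tableau of ribbon shape `α` row by row from the right gives a lattice word cut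
into weakly decreasing blocks of lengths `α`. Appending a block of length `x` inserts `x` into
the sorted list of lengths, and the lattice condition lets the new block contain no more letters
`> k` than the word before it contains `k`'s; by induction on the number of blocks, the content
dominates `λ(α)`, which excludes every content `μ <_lex λ(α)`. If the content is exactly `λ(α)`,
the same estimates run backwards: every prefix of blocks again has content `λ` of its lengths,
so each block is the horizontal strip between two consecutive such partitions. Conversely these
strips do assemble into an LR tableau.
-/

open List

def sortDesc (l : List ℕ) : List ℕ := l.insertionSort (· ≥ ·)

lemma sortDesc_perm (l : List ℕ) : sortDesc l ~ l := perm_insertionSort _ l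

lemma pairwise_sortDesc (l : List ℕ) : (sortDesc l).Pairwise (· ≥ ·) := pairwise_insertionSort _ l

lemma eq_sortDesc_of_perm {l m : List ℕ} (h : m ~ l) (hm : m.Pairwise (· ≥ ·)) :
    m = sortDesc l :=
  (h.trans (sortDesc_perm l).symm).eq_of_pairwise (fun _ _ _ _ h₁ h₂ => le_antisymm h₂ h₁) hm
    (pairwise_sortDesc l)

lemma sortDesc_append_singleton (l : List ℕ) (x : ℕ) :
    sortDesc (l ++ [x]) = (sortDesc l).orderedInsert (· ≥ ·) x :=
  (eq_sortDesc_of_perm (((perm_orderedInsert _ x _).trans ((sortDesc_perm l).cons x)).trans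
    (perm_append_singleton x l).symm) ((pairwise_sortDesc l).orderedInsert x _)).symm

lemma exists_eq_append_of_pairwise_ge {b : List ℕ} (hb : b.Pairwise (· ≥ ·)) (m : ℕ) :
    ∃ t d, b = t ++ d ∧ (∀ y ∈ t, m ≤ y) ∧ ∀ y ∈ d, y < m := by
  induction b with
  | nil => exact ⟨[], [], rfl, by simp, by simp⟩
  | cons a b ih =>
    by_cases ha : m ≤ a
    · obtain ⟨t, d, rfl, ht, hd⟩ := ih hb.of_cons
      refine ⟨a :: t, d, rfl, ?_, hd⟩
      simp only [mem_cons, forall_eq_or_imp]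
      exact ⟨ha, ht⟩
    · refine ⟨[], a :: b, rfl, by simp, ?_⟩
      simp only [mem_cons, forall_eq_or_imp]
      exact ⟨by omega, fun y hy => lt_of_le_of_lt (rel_of_pairwise_cons hb hy) (by omega)⟩

lemma exists_orderedInsert_eq {s : List ℕ} (hs : s.Pairwise (· ≥ ·)) (x : ℕ) :
    ∃ t d, s = t ++ d ∧ s.orderedInsert (· ≥ ·) x = t ++ x :: d ∧
      (∀ y ∈ d, y ≤ x) ∧ d.Pairwise (· ≥ ·) := by
  obtain ⟨t, d, rfl, ht, hd⟩ := exists_eq_append_of_pairwise_ge hs (x + 1)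
  have hdx : ∀ y ∈ d, y ≤ x := fun y hy => Nat.lt_succ_iff.mp (hd y hy)
  have hd' : d.Pairwise (· ≥ ·) := hs.sublist (sublist_append_right t d)
  refine ⟨t, d, rfl, Eq.symm ?_, hdx, hd'⟩
  refine Perm.eq_of_pairwise (fun _ _ _ _ h₁ h₂ => le_antisymm h₂ h₁) ?_
    (hs.orderedInsert x _) (perm_middle.trans (perm_orderedInsert _ x _).symm)
  refine pairwise_append.mpr ⟨hs.sublist (sublist_append_left t d), pairwise_cons.mpr ⟨hdx, hd'⟩,
    fun a ha c hc => ?_⟩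
  rcases mem_cons.mp hc with rfl | hc
  · have := ht a ha
    omega
  · have := ht a ha
    have := hdx c hc
    omega

lemma getD_succ_le_getD {l : List ℕ} (hl : l.Pairwise (· ≥ ·)) (i : ℕ) :
    l.getD (i + 1) 0 ≤ l.getD i 0 := by
  induction l generalizing i with
  | nil => simp
  | cons a l ih =>
    cases i with
    | zero =>
      cases l with
      | nil => simp
      | cons b l => simpa using rel_of_pairwise_cons hl mem_cons_self
    | succ i => simpa using ih hl.of_cons i

lemma getD_le_getD_orderedInsert {s : List ℕ} (hs : s.Pairwise (· ≥ ·)) (x i : ℕ) :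
    s.getD i 0 ≤ (s.orderedInsert (· ≥ ·) x).getD i 0 := by
  obtain ⟨t, d, rfl, hins, hdx, hd⟩ := exists_orderedInsert_eq hs x
  rw [hins]
  rcases lt_or_ge i t.length with hi | hi
  · rw [getD_append _ _ _ _ hi, getD_append _ _ _ _ hi]
  · obtain ⟨j, rfl⟩ := Nat.exists_eq_add_of_le hi
    rw [getD_append_right _ _ _ _ hi, getD_append_right _ _ _ _ hi, Nat.add_sub_cancel_left]
    cases j with
    | zero =>
      cases d with
      | nil => simp
      | cons y d => simpa using hdx y mem_cons_self
    | succ j => simpa using getD_succ_le_getD hd j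

lemma getD_succ_orderedInsert_le {s : List ℕ} (hs : s.Pairwise (· ≥ ·)) (x i : ℕ) :
    (s.orderedInsert (· ≥ ·) x).getD (i + 1) 0 ≤ s.getD i 0 := by
  have hsorted := getD_succ_le_getD (hs.orderedInsert x _) i
  obtain ⟨t, d, rfl, hins, -, -⟩ := exists_orderedInsert_eq hs x
  rw [hins] at hsorted ⊢
  rcases lt_or_ge i t.length with hi | hi
  · rwa [getD_append _ _ _ _ hi, ← getD_append _ _ _ _ hi] at hsorted
  · rw [getD_append_right _ _ _ _ (by omega), getD_append_right _ _ _ _ hi,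
      show i + 1 - t.length = i - t.length + 1 by omega, getD_cons_succ]

lemma sum_take_succ_getD (l : List ℕ) (n : ℕ) :
    (l.take (n + 1)).sum = (l.take n).sum + l.getD n 0 := by
  rcases lt_or_ge n l.length with hn | hn
  · rw [sum_take_succ _ _ hn, getD_eq_getElem _ _ hn]
  · rw [take_of_length_le hn, take_of_length_le (by omega), getD_eq_default _ _ hn, add_zero]

lemma take_append_cons_of_le {t d : List ℕ} {k : ℕ} (x : ℕ) (hk : k ≤ t.length) :
    (t ++ x :: d).take k = (t ++ d).take k := by
  rw [take_append_of_le_length hk, take_append_of_le_length hk]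

lemma sum_take_succ_append_cons {t d : List ℕ} {k : ℕ} (x : ℕ) (hk : t.length ≤ k) :
    ((t ++ x :: d).take (k + 1)).sum = x + ((t ++ d).take k).sum := by
  rw [take_append, take_append, take_of_length_le (by omega), take_of_length_le hk,
    show k + 1 - t.length = k - t.length + 1 by omega, take_succ_cons]
  simp only [sum_append, sum_cons]
  omega

lemma sum_take_eq_of_getD_eq {μ ν : List ℕ} {i : ℕ} (h : ∀ j < i, μ.getD j 0 = ν.getD j 0) :
    (μ.take i).sum = (ν.take i).sum := by
  induction i with
  | zero => simp
  | succ i ih =>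
    rw [sum_take_succ_getD, sum_take_succ_getD, ih fun j hj => h j (by omega), h i (by omega)]

lemma not_lexLtList_of_sum_take_le {μ ν : List ℕ} (h : ∀ k, (ν.take k).sum ≤ (μ.take k).sum) :
    ¬ LexLtList μ ν := by
  rintro ⟨i, hpre, hi⟩
  have := h (i + 1)
  rw [sum_take_succ_getD, sum_take_succ_getD, sum_take_eq_of_getD_eq hpre] at this
  omega

lemma countP_le_zero (w : List ℕ) : w.countP (· ≤ 0) = w.count 0 := by
  rw [count_eq_countP]
  exact countP_congr fun x _ => by simp

lemma countP_le_succ (w : List ℕ) (k : ℕ) :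
    w.countP (· ≤ k + 1) = w.countP (· ≤ k) + w.count (k + 1) := by
  induction w with
  | nil => simp
  | cons a w ih =>
    simp only [countP_cons, count_cons, ih, beq_iff_eq, decide_eq_true_eq]
    split_ifs <;> omega

lemma countP_lt_eq_add_count (w : List ℕ) (k : ℕ) :
    w.countP (k < ·) = w.countP (k + 1 < ·) + w.count (k + 1) := by
  induction w with
  | nil => simp
  | cons a w ih =>
    simp only [countP_cons, count_cons, ih, beq_iff_eq, decide_eq_true_eq]
    split_ifs <;> omega

lemma countP_le_add_countP_lt (w : List ℕ) (k : ℕ) :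
    w.countP (· ≤ k) + w.countP (k < ·) = w.length := by
  induction w with
  | nil => simp
  | cons a w ih =>
    simp only [countP_cons, length_cons, decide_eq_true_eq]
    split_ifs <;> omega

@[simp] lemma monoOf_zero (ν : List ℕ) : monoOf ν 0 = 0 := rfl

@[simp] lemma monoOf_succ (ν : List ℕ) (v : ℕ) : monoOf ν (v + 1) = ν.getD v 0 := rfl

lemma count_eq_monoOf_iff {w ν : List ℕ} :
    (∀ v, w.count v = monoOf ν v) ↔ ∀ k, w.countP (· ≤ k) = (ν.take k).sum := by
  constructor
  · intro h k
    induction k with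
    | zero => rw [countP_le_zero, h, monoOf_zero, take_zero, sum_nil]
    | succ k ih => rw [countP_le_succ, ih, sum_take_succ_getD, h, monoOf_succ]
  · rintro h (_ | v)
    · have := h 0
      rwa [countP_le_zero, take_zero, sum_nil] at this
    · have := h (v + 1)
      rw [countP_le_succ, h v, sum_take_succ_getD] at this
      rw [monoOf_succ]
      omega

lemma length_eq_sum_of_count_eq_monoOf {w ν : List ℕ} (h : ∀ v, w.count v = monoOf ν v) :
    w.length = ν.sum := by
  have hall : w.countP (· ≤ w.sum + ν.length) = w.length :=
    countP_eq_length.mpr fun a ha => by simpa using (le_sum_of_mem ha).trans (Nat.le_add_right _ _)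
  rw [← hall, count_eq_monoOf_iff.mp h, take_of_length_le (Nat.le_add_left _ _)]

namespace IsLatticeWord

lemma count_le {w : List ℕ} (hw : IsLatticeWord w) (i : ℕ) : w.count (i + 2) ≤ w.count (i + 1) := by
  simpa using hw w.length i

lemma of_append {u v : List ℕ} (h : IsLatticeWord (u ++ v)) : IsLatticeWord u := by
  intro n i
  rcases le_or_gt n u.length with hn | hn
  · simpa [take_append_of_le_length hn] using h n i
  · simpa [take_of_length_le hn.le] using h u.length i

lemma append {w b : List ℕ} (hw : IsLatticeWord w)
    (h : ∀ i, w.count (i + 2) + b.count (i + 2) ≤ w.count (i + 1)) : IsLatticeWord (w ++ b) := by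
  intro n i
  rcases le_or_gt n w.length with hn | hn
  · rw [take_append_of_le_length hn]
    exact hw n i
  · rw [take_append, take_of_length_le hn.le, count_append, count_append]
    have := (take_sublist (n - w.length) b).count_le (i + 2)
    have := h i
    have := hw.count_le i
    omega

lemma count_add_count_le {w b : List ℕ} (h : IsLatticeWord (w ++ b))
    (hb : b.Pairwise (· ≥ ·)) {k : ℕ} (hk : 0 < k) :
    w.count (k + 1) + b.count (k + 1) ≤ w.count k := by
  obtain ⟨i, rfl⟩ : ∃ i, k = i + 1 := ⟨k - 1, by omega⟩
  show w.count (i + 2) + b.count (i + 2) ≤ w.count (i + 1)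
  -- the letters `≥ i + 2` of the block come first, and none of them is an `i + 1`
  obtain ⟨t, d, rfl, ht, hd⟩ := exists_eq_append_of_pairwise_ge hb (i + 2)
  have hprefix := h (w.length + t.length) i
  rw [← append_assoc, take_left' (by simp)] at hprefix
  have ht' : t.count (i + 1) = 0 := count_eq_zero.mpr fun hm => by have := ht _ hm; omega
  have hd' : d.count (i + 2) = 0 := count_eq_zero.mpr fun hm => by have := hd _ hm; omega
  simp only [count_append] at hprefix ⊢
  omega

lemma countP_lt_le_count {w b : List ℕ} (h : IsLatticeWord (w ++ b))
    (hb : b.Pairwise (· ≥ ·)) {k : ℕ} (hk : 0 < k) : b.countP (k < ·) ≤ w.count k := by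
  have telescope : ∀ n, k ≤ n → b.countP (k < ·) + w.count n ≤ b.countP (n < ·) + w.count k := by
    intro n hn
    induction n, hn using Nat.le_induction with
    | base => exact le_refl _
    | succ n hkn ih =>
      have := h.count_add_count_le hb (lt_of_lt_of_le hk hkn)
      rw [countP_lt_eq_add_count b n] at ih
      omega
  have hnone : b.countP (k + b.sum < ·) = 0 :=
    countP_eq_zero.mpr fun a ha => by simpa using (le_sum_of_mem ha).trans (Nat.le_add_left _ _)
  have := telescope (k + b.sum) (Nat.le_add_right _ _)
  omega

end IsLatticeWord

def IsLatticeBlocks (L : List (List ℕ)) : Prop :=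
  (∀ b ∈ L, b.Pairwise (· ≥ ·)) ∧ IsLatticeWord L.flatten

lemma IsLatticeBlocks.of_append_singleton {L : List (List ℕ)} {b : List ℕ}
    (h : IsLatticeBlocks (L ++ [b])) :
    IsLatticeBlocks L ∧ b.Pairwise (· ≥ ·) ∧ IsLatticeWord (L.flatten ++ b) := by
  rw [IsLatticeBlocks, flatten_concat] at h
  exact ⟨⟨fun c hc => h.1 c (mem_append_left _ hc), h.2.of_append⟩,
    h.1 b (mem_append_right _ (mem_singleton_self b)), h.2⟩

theorem IsLatticeBlocks.sum_take_sortDesc_le {L : List (List ℕ)} (hL : IsLatticeBlocks L)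
    (k : ℕ) : ((sortDesc (L.map length)).take k).sum ≤ L.flatten.countP (· ≤ k) := by
  induction L using reverseRecOn generalizing k with
  | nil => simp [sortDesc]
  | append_singleton L b ih =>
    obtain ⟨hL, hb, hw⟩ := hL.of_append_singleton
    obtain ⟨t, d, hs, hins, -, -⟩ :=
      exists_orderedInsert_eq (pairwise_sortDesc (L.map length)) b.length
    rw [map_append, map_singleton, sortDesc_append_singleton, hins, flatten_concat, countP_append]
    rcases le_or_gt k t.length with hk | hk
    · rw [take_append_cons_of_le _ hk, ← hs]
      have := ih hL k
      omega
    · obtain ⟨k, rfl⟩ : ∃ j, k = j + 1 := ⟨k - 1, by omega⟩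
      rw [sum_take_succ_append_cons _ (by omega), ← hs]
      have := ih hL k
      have := hw.countP_lt_le_count hb (k := k + 1) (by omega)
      have := countP_le_add_countP_lt b (k + 1)
      have := countP_le_succ L.flatten k
      omega

lemma countP_le_add_le_sum_take_succ {w ν : List ℕ} {x : ℕ}
    (hν : ∀ j, ν.getD (j + 1) 0 ≤ w.count (j + 1)) (hsum : w.length + x = ν.sum) (k : ℕ) :
    w.countP (· ≤ k) + x ≤ (ν.take (k + 1)).sum := by
  -- `(ν.take (n + 1)).sum - w.countP (· ≤ n)` decreases in `n` and is eventually `x`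
  have telescope : ∀ n, k ≤ n →
      w.countP (· ≤ k) + (ν.take (n + 1)).sum ≤ w.countP (· ≤ n) + (ν.take (k + 1)).sum := by
    intro n hn
    induction n, hn using Nat.le_induction with
    | base => exact le_refl _
    | succ n _ ih =>
      have := hν n
      have := sum_take_succ_getD ν (n + 1)
      have := countP_le_succ w n
      omega
  have hall : w.countP (· ≤ k + w.sum + ν.length) = w.length :=
    countP_eq_length.mpr fun a ha => by
      simpa using (le_sum_of_mem ha).trans (by omega : w.sum ≤ k + w.sum + ν.length)
  have := telescope (k + w.sum + ν.length) (by omega)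
  rw [take_of_length_le (by omega), hall] at this
  omega

theorem IsLatticeBlocks.count_eq_of_append_singleton {L : List (List ℕ)} {b : List ℕ}
    (hL : IsLatticeBlocks (L ++ [b]))
    (h : ∀ v, (L ++ [b]).flatten.count v = monoOf (sortDesc ((L ++ [b]).map length)) v) :
    ∀ v, L.flatten.count v = monoOf (sortDesc (L.map length)) v := by
  obtain ⟨hL, hb, hw⟩ := hL.of_append_singleton
  obtain ⟨t, d, hs, hins, -, -⟩ :=
    exists_orderedInsert_eq (pairwise_sortDesc (L.map length)) b.length
  rw [map_append, map_singleton, sortDesc_append_singleton, hins, flatten_concat] at h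
  have hsum : L.flatten.length + b.length = (t ++ b.length :: d).sum := by
    rw [← length_eq_sum_of_count_eq_monoOf h, length_append]
  have hν : ∀ j, (t ++ b.length :: d).getD (j + 1) 0 ≤ L.flatten.count (j + 1) := by
    intro j
    have := h (j + 1 + 1)
    rw [count_append, monoOf_succ] at this
    have := hw.count_add_count_le hb (k := j + 1) (by omega)
    omega
  have hdom := hL.sum_take_sortDesc_le
  rw [hs] at hdom ⊢
  rw [count_eq_monoOf_iff] at h ⊢
  refine fun k => le_antisymm ?_ (hdom k)
  rcases le_or_gt k t.length with hk | hk
  · have := h k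
    rw [countP_append, take_append_cons_of_le _ hk] at this
    omega
  · have := countP_le_add_le_sum_take_succ hν hsum k
    rw [sum_take_succ_append_cons _ hk.le] at this
    omega

theorem IsLatticeBlocks.eq_of_count_eq {L₁ L₂ : List (List ℕ)} (h₁ : IsLatticeBlocks L₁)
    (h₂ : IsLatticeBlocks L₂) (hlen : L₁.map length = L₂.map length)
    (hc₁ : ∀ v, L₁.flatten.count v = monoOf (sortDesc (L₁.map length)) v)
    (hc₂ : ∀ v, L₂.flatten.count v = monoOf (sortDesc (L₂.map length)) v) : L₁ = L₂ := by
  induction L₁ using reverseRecOn generalizing L₂ with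
  | nil => simpa [eq_comm] using hlen
  | append_singleton L₁ b₁ ih =>
    obtain rfl | ⟨L₂, b₂, rfl⟩ := eq_nil_or_concat L₂
    · simp at hlen
    rw [concat_eq_append] at *
    have hlen' := hlen
    simp only [map_append, map_singleton] at hlen
    obtain ⟨hlen, hb⟩ := append_inj' hlen rfl
    obtain rfl := ih h₁.of_append_singleton.1 h₂.of_append_singleton.1 hlen
      (h₁.count_eq_of_append_singleton hc₁) (h₂.count_eq_of_append_singleton hc₂)
    refine congrArg (L₁ ++ [·]) (Perm.eq_of_pairwise (fun _ _ _ _ h h' => le_antisymm h' h)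
      h₁.of_append_singleton.2.1 h₂.of_append_singleton.2.1 (perm_iff_count.mpr fun v => ?_))
    have e₁ := hc₁ v
    have e₂ := hc₂ v
    rw [hlen', flatten_concat, count_append] at e₁
    rw [flatten_concat, count_append] at e₂
    omega

lemma readingWord_perm (T : List (List ℕ)) : readingWord T ~ T.flatten := by
  induction T with
  | nil => rfl
  | cons r T ih =>
    simp only [readingWord, map_cons, flatten_cons] at ih ⊢
    exact (reverse_perm r).append ih

lemma count_readingWord (T : List (List ℕ)) (v : ℕ) : (readingWord T).count v = contents T v :=
  (readingWord_perm T).count_eq v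

lemma readingWord_append_singleton (T : List (List ℕ)) (r : List ℕ) :
    readingWord (T ++ [r]) = readingWord T ++ r.reverse := by
  simp [readingWord]

lemma rowsMatch_iff {sh : List ℕ} {T : List (List ℕ)} : RowsMatch sh T ↔ T.map length = sh := by
  constructor
  · rintro ⟨hl, hrows⟩
    refine ext_getElem (by simpa using hl) fun n h₁ h₂ => ?_
    have hn : n < T.length := by simpa using h₁
    have := hrows n hn
    rwa [getD_eq_getElem _ _ hn, getD_eq_getElem _ _ h₂, ← getElem_map length] at this
  · rintro rfl
    refine ⟨(length_map _).symm, fun i hi => ?_⟩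
    rw [getD_eq_getElem _ _ hi, getD_eq_getElem _ _ (by simpa using hi), getElem_map]

lemma IsLR.isLatticeBlocks {α : List ℕ} {T : List (List ℕ)} (h : IsLR α T) :
    IsLatticeBlocks (T.map reverse) := by
  refine ⟨fun b hb => ?_, h.2⟩
  obtain ⟨r, hr, rfl⟩ := mem_map.mp hb
  exact pairwise_reverse.mpr (h.1.2.1 r hr).1

lemma IsLR.map_length_map_reverse {α : List ℕ} {T : List (List ℕ)} (h : IsLR α T) :
    (T.map reverse).map length = α := by
  simpa [map_map, Function.comp_def] using rowsMatch_iff.mp h.1.1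

theorem IsLR.sum_take_sortDesc_le {α μ : List ℕ} {T : List (List ℕ)} (h : IsLR α T)
    (hc : contents T = monoOf μ) (k : ℕ) : ((sortDesc α).take k).sum ≤ (μ.take k).sum := by
  have hdom := h.isLatticeBlocks.sum_take_sortDesc_le k
  rw [h.map_length_map_reverse] at hdom
  exact hdom.trans_eq
    (count_eq_monoOf_iff.mp (fun v => (count_readingWord T v).trans (congrFun hc v)) k)

theorem IsLR.eq_of_contents_eq {α : List ℕ} {T₁ T₂ : List (List ℕ)} (h₁ : IsLR α T₁)
    (h₂ : IsLR α T₂) (hc₁ : contents T₁ = monoOf (sortDesc α))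
    (hc₂ : contents T₂ = monoOf (sortDesc α)) : T₁ = T₂ := by
  have hL₁ := h₁.map_length_map_reverse
  have hL₂ := h₂.map_length_map_reverse
  refine map_injective_iff.mpr reverse_injective
    (h₁.isLatticeBlocks.eq_of_count_eq h₂.isLatticeBlocks (hL₁.trans hL₂.symm) ?_ ?_)
  · rw [hL₁]
    exact fun v => (count_readingWord T₁ v).trans (congrFun hc₁ v)
  · rw [hL₂]
    exact fun v => (count_readingWord T₂ v).trans (congrFun hc₂ v)

def ascendingWord (c : ℕ → ℕ) : ℕ → List ℕ
  | 0 => []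
  | n + 1 => ascendingWord c n ++ replicate (c n) (n + 1)

lemma count_succ_ascendingWord (c : ℕ → ℕ) (n v : ℕ) :
    (ascendingWord c n).count (v + 1) = if v < n then c v else 0 := by
  induction n with
  | zero => simp [ascendingWord]
  | succ n ih =>
    rw [ascendingWord, count_append, ih, count_replicate]
    rcases lt_trichotomy v n with h | rfl | h
    · simp [h, h.ne', Nat.lt_succ_of_lt h]
    · simp
    · simp [h.ne, not_lt.mpr h.le, not_lt.mpr (Nat.succ_le_of_lt h)]

lemma pos_and_le_of_mem_ascendingWord {c : ℕ → ℕ} {n y : ℕ} (hy : y ∈ ascendingWord c n) :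
    0 < y ∧ y ≤ n := by
  induction n with
  | zero => simp [ascendingWord] at hy
  | succ n ih =>
    rcases mem_append.mp hy with hy | hy
    · have := ih hy
      omega
    · have := eq_of_mem_replicate hy
      omega

lemma pairwise_ascendingWord (c : ℕ → ℕ) (n : ℕ) : (ascendingWord c n).Pairwise (· ≤ ·) := by
  induction n with
  | zero => exact Pairwise.nil
  | succ n ih =>
    refine pairwise_append.mpr ⟨ih, pairwise_replicate.mpr (Or.inr le_rfl), fun a ha b hb => ?_⟩
    rw [eq_of_mem_replicate hb]
    exact (pos_and_le_of_mem_ascendingWord ha).2.trans (Nat.le_succ n)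

def skewRow (μ ν : List ℕ) : List ℕ := ascendingWord (fun i => ν.getD i 0 - μ.getD i 0) ν.length

lemma count_skewRow (μ ν : List ℕ) (v : ℕ) :
    (skewRow μ ν).count v = monoOf ν v - monoOf μ v := by
  cases v with
  | zero => exact count_eq_zero.mpr fun h => (pos_and_le_of_mem_ascendingWord h).1.ne rfl
  | succ v =>
    rw [skewRow, count_succ_ascendingWord, monoOf_succ, monoOf_succ]
    split_ifs with hv
    · rfl
    · rw [getD_eq_default _ _ (not_lt.mp hv), Nat.zero_sub]

lemma monoOf_sortDesc_le_append_singleton (α : List ℕ) (x v : ℕ) :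
    monoOf (sortDesc α) v ≤ monoOf (sortDesc (α ++ [x])) v := by
  rcases v with _ | v
  · exact le_rfl
  · simpa [sortDesc_append_singleton] using getD_le_getD_orderedInsert (pairwise_sortDesc α) x v

def canonicalTableau (α : List ℕ) : List (List ℕ) :=
  (range α.length).map fun j => skewRow (sortDesc (α.take j)) (sortDesc (α.take (j + 1)))

@[simp] lemma length_canonicalTableau (α : List ℕ) : (canonicalTableau α).length = α.length := by
  simp [canonicalTableau]

lemma canonicalTableau_append_singleton (α : List ℕ) (x : ℕ) :
    canonicalTableau (α ++ [x]) =
      canonicalTableau α ++ [skewRow (sortDesc α) (sortDesc (α ++ [x]))] := by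
  rw [canonicalTableau, length_append, length_singleton, range_succ, map_append, map_singleton,
    take_left' rfl, take_of_length_le (by simp), canonicalTableau]
  congr 1
  refine map_congr_left fun j hj => ?_
  have hj := mem_range.mp hj
  rw [take_append_of_le_length hj.le, take_append_of_le_length hj]

lemma getD_canonicalTableau {α : List ℕ} {j : ℕ} (hj : j < α.length) :
    (canonicalTableau α).getD j [] = skewRow (sortDesc (α.take j)) (sortDesc (α.take (j + 1))) := by
  simp [canonicalTableau, hj]

lemma count_flatten_canonicalTableau (α : List ℕ) (v : ℕ) :
    (canonicalTableau α).flatten.count v = monoOf (sortDesc α) v := by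
  induction α using reverseRecOn with
  | nil => cases v <;> simp [canonicalTableau, sortDesc]
  | append_singleton α x ih =>
    have := monoOf_sortDesc_le_append_singleton α x v
    rw [canonicalTableau_append_singleton, flatten_concat, count_append, ih, count_skewRow]
    omega

lemma map_length_canonicalTableau (α : List ℕ) : (canonicalTableau α).map length = α := by
  induction α using reverseRecOn with
  | nil => rfl
  | append_singleton α x ih =>
    have h₁ := length_eq_sum_of_count_eq_monoOf (count_flatten_canonicalTableau α)
    have h₂ := length_eq_sum_of_count_eq_monoOf (count_flatten_canonicalTableau (α ++ [x]))
    rw [(sortDesc_perm _).sum_eq] at h₁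
    rw [(sortDesc_perm _).sum_eq, canonicalTableau_append_singleton, flatten_concat, length_append,
      sum_append, h₁] at h₂
    rw [canonicalTableau_append_singleton, map_append, ih, map_singleton]
    simp only [sum_singleton] at h₂
    rw [Nat.add_left_cancel h₂]

lemma isLatticeWord_readingWord_canonicalTableau (α : List ℕ) :
    IsLatticeWord (readingWord (canonicalTableau α)) := by
  induction α using reverseRecOn with
  | nil => intro n i; simp [canonicalTableau, readingWord]
  | append_singleton α x ih =>
    rw [canonicalTableau_append_singleton, readingWord_append_singleton]
    refine ih.append fun i => ?_
    rw [count_reverse, count_readingWord, count_readingWord, contents, contents,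
      count_flatten_canonicalTableau, count_flatten_canonicalTableau, count_skewRow]
    have := monoOf_sortDesc_le_append_singleton α x (i + 1 + 1)
    have := getD_succ_orderedInsert_le (pairwise_sortDesc α) x i
    rw [← sortDesc_append_singleton] at this
    simp only [monoOf_succ] at *
    omega

lemma le_of_mem_getD_canonicalTableau {α : List ℕ} {j y : ℕ}
    (hy : y ∈ (canonicalTableau α).getD j []) : y ≤ j + 1 := by
  rcases lt_or_ge j α.length with hj | hj
  · rw [getD_canonicalTableau hj, skewRow] at hy
    have := (pos_and_le_of_mem_ascendingWord hy).2
    rw [(sortDesc_perm _).length_eq, length_take] at this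
    omega
  · rw [getD_eq_default _ _ (by simpa using hj)] at hy
    simp at hy

lemma succ_mem_getD_canonicalTableau {α : List ℕ} (hα : IsComposition α) {j : ℕ}
    (hj : j < α.length) : j + 1 ∈ (canonicalTableau α).getD j [] := by
  have hlen : (sortDesc (α.take (j + 1))).length = j + 1 := by
    rw [(sortDesc_perm _).length_eq, length_take]
    omega
  have hmem : (sortDesc (α.take (j + 1))).getD j 0 ∈ α := by
    rw [getD_eq_getElem _ _ (by omega)]
    exact mem_of_mem_take ((sortDesc_perm _).subset (getElem_mem _))
  rw [getD_canonicalTableau hj, ← count_pos_iff, count_skewRow, monoOf_succ,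
    monoOf_succ, getD_eq_default (sortDesc (α.take j)) 0 (by simp [(sortDesc_perm _).length_eq])]
  have := hα _ hmem
  omega

lemma le_getLastD_of_mem {l : List ℕ} (hl : l.Pairwise (· ≤ ·)) {y : ℕ} (hy : y ∈ l) :
    y ≤ l.getLastD 0 := by
  obtain rfl | ⟨l, z, rfl⟩ := eq_nil_or_concat l
  · simp at hy
  rw [concat_eq_append] at hl hy ⊢
  rw [getLastD_concat]
  rcases mem_append.mp hy with hy | hy
  · exact hl.rel_of_mem_append hy (mem_singleton_self z)
  · rw [mem_singleton.mp hy]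

theorem isLR_canonicalTableau {α : List ℕ} (hα : IsComposition α) :
    IsLR α (canonicalTableau α) := by
  refine ⟨⟨rowsMatch_iff.mpr (map_length_canonicalTableau α), fun row hrow => ?_, fun i hi => ?_⟩,
    isLatticeWord_readingWord_canonicalTableau α⟩
  · obtain ⟨j, -, rfl⟩ := mem_map.mp hrow
    exact ⟨pairwise_ascendingWord _ _, fun y hy => (pos_and_le_of_mem_ascendingWord hy).1⟩
  · rw [length_canonicalTableau] at hi
    have hlast : i + 2 ≤ ((canonicalTableau α).getD (i + 1) []).getLastD 0 := by
      refine le_getLastD_of_mem ?_ (succ_mem_getD_canonicalTableau hα hi)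
      rw [getD_canonicalTableau hi]
      exact pairwise_ascendingWord _ _
    obtain ⟨a, r, hr⟩ := exists_cons_of_ne_nil
      (ne_nil_of_mem (succ_mem_getD_canonicalTableau hα (j := i) (by omega)))
    have := le_of_mem_getD_canonicalTableau (hr ▸ mem_cons_self : a ∈ _)
    rw [hr, headI_cons]
    omega

/-- Equation (2.4): in the Schur expansion `r_α = Σ_μ c_{α,μ} s_μ` given by the
Littlewood–Richardson rule, the coefficient of `s_{λ(α)}` is `1` and the
coefficient of `s_μ` vanishes for every partition `μ` of the same size with
`μ <_lex λ(α)`.  Here `lam` is `λ(α)`: the weakly decreasing rearrangement of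
`α`. -/
theorem ribbon_lex_smallest_term
    (α lam : List ℕ)
    (hα : IsComposition α)
    (hlam : IsPartitionList lam)
    (hperm : (↑lam : Multiset ℕ) = (↑α : Multiset ℕ)) :
    lrCoeff α lam = 1 ∧
      ∀ μ : List ℕ, IsPartitionList μ → μ.sum = α.sum →
        LexLtList μ lam → lrCoeff α μ = 0 := by
  obtain rfl : lam = sortDesc α := eq_sortDesc_of_perm (Multiset.coe_eq_coe.mp hperm) hlam.1
  have hcan : IsLR α (canonicalTableau α) ∧ contents (canonicalTableau α) = monoOf (sortDesc α) :=
    ⟨isLR_canonicalTableau hα, funext (count_flatten_canonicalTableau α)⟩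
  refine ⟨Set.ncard_eq_one.mpr ⟨canonicalTableau α, Set.eq_singleton_iff_unique_mem.mpr
    ⟨hcan, fun T hT => hT.1.eq_of_contents_eq hcan.1 hT.2 hcan.2⟩⟩, fun μ _ _ hlt => ?_⟩
  have hempty : {T | IsLR α T ∧ contents T = monoOf μ} = ∅ :=
    Set.eq_empty_of_forall_notMem fun T hT =>
      not_lexLtList_of_sum_take_le (hT.1.sum_take_sortDesc_le hT.2) hlt
  rw [lrCoeff, hempty, Set.ncard_empty]

end RibbonNearEq
end
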